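/- arXiv:2109.09184 — 2 statements merged into one kernel-verified Lean document; each statement's English description precedes it below -/
import Mathlib

section
/- Let α > −1 and let y be a degree n polynomial with n distinct positive roots x_1, ..., x_n satisfying the Laguerre differential equation x y'' + (α + 1 − x)y' + n y = 0. Then for each k, ∑_{j ≠ k} 1/(x_k − x_j) + (α+1)/(2 x_k) − 1/2 = 0. -/
/-!
Write `y = cn * P` with `P = ∏ i (X - x_i)` and split off the factor of a root:
`P = (X - x_k) q` with `q(x_k) ≠ 0`. Then `P'(x_k) = q(x_k)` and `P''(x_k) = 2 q'(x_k)`, while the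
logarithmic derivative of `q` at `x_k` is `∑_{j ≠ k} 1 / (x_k - x_j)`. Evaluating the differential
equation at `x_k`, where `y` vanishes, and dividing by `2 x_k P'(x_k) ≠ 0` gives the identity.
-/

open Polynomial Finset

theorem Set.InjOn.ne_of_mem_erase {ι β : Type*} [DecidableEq ι] {s : Finset ι} {x : ι → β}
    (hx : Set.InjOn x s) {j k : ι} (hk : k ∈ s) (hj : j ∈ s.erase k) : x k ≠ x j :=
  fun h => Finset.ne_of_mem_erase hj (hx (mem_of_mem_erase hj) hk h.symm)

section RootDerivatives

variable {R : Type*} [CommRing R]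

theorem eval_derivative_X_sub_C_mul_self (a : R) (q : R[X]) :
    (derivative ((X - C a) * q)).eval a = q.eval a := by
  simp [derivative_mul]

theorem eval_derivative_derivative_X_sub_C_mul_self (a : R) (q : R[X]) :
    (derivative (derivative ((X - C a) * q))).eval a = 2 * (derivative q).eval a := by
  simp only [derivative_mul, derivative_X_sub_C, map_add, zero_mul, one_mul, eval_add, eval_mul,
    eval_sub, eval_X, eval_C, sub_self]
  ring

end RootDerivatives

section ProdXSubC

variable {K ι : Type*} [Field K] [DecidableEq ι]

theorem eval_derivative_prod_X_sub_C {s : Finset ι} {x : ι → K} {a : K}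
    (ha : ∀ j ∈ s, a ≠ x j) :
    (derivative (∏ j ∈ s, (X - C (x j)))).eval a
      = (∏ j ∈ s, (a - x j)) * ∑ j ∈ s, 1 / (a - x j) := by
  simp only [derivative_prod_finset, derivative_X_sub_C, mul_one, eval_finsetSum, eval_prod,
    eval_sub, eval_X, eval_C, mul_sum]
  refine sum_congr rfl fun j hj => ?_
  rw [← prod_erase_mul s _ hj, mul_assoc, mul_one_div_cancel (sub_ne_zero.mpr (ha j hj)), mul_one]

variable {s : Finset ι} {x : ι → K} {k : ι}

theorem eval_derivative_prod_X_sub_C_of_mem (hk : k ∈ s) :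
    (derivative (∏ j ∈ s, (X - C (x j)))).eval (x k) = ∏ j ∈ s.erase k, (x k - x j) := by
  rw [← mul_prod_erase s _ hk, eval_derivative_X_sub_C_mul_self, eval_prod]
  simp only [eval_sub, eval_X, eval_C]

theorem eval_derivative_prod_X_sub_C_ne_zero (hx : Set.InjOn x s) (hk : k ∈ s) :
    (derivative (∏ j ∈ s, (X - C (x j)))).eval (x k) ≠ 0 := by
  rw [eval_derivative_prod_X_sub_C_of_mem hk, prod_ne_zero_iff]
  exact fun j hj => sub_ne_zero.mpr (hx.ne_of_mem_erase hk hj)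

theorem eval_derivative_derivative_prod_X_sub_C (hx : Set.InjOn x s) (hk : k ∈ s) :
    (derivative (derivative (∏ j ∈ s, (X - C (x j))))).eval (x k)
      = 2 * (derivative (∏ j ∈ s, (X - C (x j)))).eval (x k)
          * ∑ j ∈ s.erase k, 1 / (x k - x j) := by
  rw [eval_derivative_prod_X_sub_C_of_mem hk, ← mul_prod_erase s _ hk,
    eval_derivative_derivative_X_sub_C_mul_self,
    eval_derivative_prod_X_sub_C fun j hj => hx.ne_of_mem_erase hk hj, mul_assoc]

end ProdXSubC

theorem stmt_8_general (n : ℕ) (α cn : ℝ) (x : Fin n → ℝ)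
    (hcn : cn ≠ 0) (hx : Function.Injective x) (hpos : ∀ i, 0 < x i)
    (y : ℝ → ℝ) (hy : y = fun t => cn * ∏ i, (t - x i))
    (hode : ∀ t : ℝ, t * deriv (deriv y) t + (α + 1 - t) * deriv y t + n * y t = 0) :
    ∀ k : Fin n, ∑ j ∈ Finset.univ.erase k, 1 / (x k - x j)
        + (α + 1) / (2 * x k) - 1 / 2 = 0 := by
  intro k
  have hP' := eval_derivative_prod_X_sub_C_ne_zero hx.injOn (mem_univ k)
  have hP'' := eval_derivative_derivative_prod_X_sub_C hx.injOn (mem_univ k)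
  set P : ℝ[X] := ∏ i, (X - C (x i))
  set S := ∑ j ∈ univ.erase k, 1 / (x k - x j)
  have hyP : y = fun t => (C cn * P).eval t := by simp [hy, P, eval_prod]
  have hderiv : deriv y = fun t => (derivative (C cn * P)).eval t := by
    ext t; rw [hyP, Polynomial.deriv]
  have hroot : y (x k) = 0 := by simp [hy, prod_eq_zero (mem_univ k)]
  have hode_root := hode (x k)
  rw [hderiv, Polynomial.deriv, hroot] at hode_root
  simp only [derivative_C_mul, eval_mul, eval_C, hP''] at hode_root
  have hroot_eq : 2 * x k * S + (α + 1 - x k) = 0 := by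
    refine (mul_eq_zero.mp ?_).resolve_left (mul_ne_zero hcn hP')
    linear_combination hode_root
  have hxk : x k ≠ 0 := (hpos k).ne'
  field_simp
  linear_combination hroot_eq

theorem stmt_8 (n : ℕ) (α cn : ℝ) (hα : -1 < α) (x : Fin n → ℝ)
    (hcn : cn ≠ 0) (hx : Function.Injective x) (hpos : ∀ i, 0 < x i)
    (y : ℝ → ℝ) (hy : y = fun t => cn * ∏ i, (t - x i))
    (hode : ∀ t : ℝ, t * deriv (deriv y) t + (α + 1 - t) * deriv y t + n * y t = 0) :
    ∀ k : Fin n, ∑ j ∈ Finset.univ.erase k, 1 / (x k - x j)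
        + (α + 1) / (2 * x k) - 1 / 2 = 0 :=
  stmt_8_general n α cn x hcn hx hpos y hy hode
end

section
/- The function ln f(x⃗) = ∑_{i<j} ln(x_j − x_i) − (1/2)∑_{k=1}^n x_k² is strictly concave on D_n = {x⃗ ∈ ℝⁿ : x_1 < ... < x_n}, and hence has at most one critical point in D_n. -/
/-!
Each term `log (x_j - x_i)` is the concave function `log` composed with a linear form, hence
concave on the convex set `D_n`, while `-(1/2) ∑ x_k²` is strictly concave; so `ln f` is strictly
concave on `D_n`. Restricting a concave function to the segment from a critical point `x` to any
`y` shows that `x` is a global maximum, and a strictly concave function has at most one.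
-/

open Set

theorem ConcaveOn.fun_sum {𝕜 E β ι : Type*} [Semiring 𝕜] [PartialOrder 𝕜] [AddCommMonoid E]
    [AddCommMonoid β] [PartialOrder β] [IsOrderedAddMonoid β] [SMul 𝕜 E] [Module 𝕜 β]
    {s : Set E} (t : Finset ι) {f : ι → E → β} (hs : Convex 𝕜 s)
    (hf : ∀ i ∈ t, ConcaveOn 𝕜 s (f i)) : ConcaveOn 𝕜 s fun x => ∑ i ∈ t, f i x := by
  classical
  induction t using Finset.induction_on with
  | empty => simpa using concaveOn_const (0 : β) hs
  | insert a t ha ih =>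
    simp only [Finset.sum_insert ha]
    exact (hf a (Finset.mem_insert_self a t)).add
      (ih fun i hi => hf i (Finset.mem_insert_of_mem hi))

theorem StrictConvexOn.const_mul {E : Type*} [AddCommMonoid E] [Module ℝ E] {s : Set E}
    {f : E → ℝ} {c : ℝ} (hc : 0 < c) (hf : StrictConvexOn ℝ s f) :
    StrictConvexOn ℝ s fun x => c * f x := by
  refine ⟨hf.1, fun x hx y hy hxy a b ha hb hab => ?_⟩
  have := hf.2 hx hy hxy ha hb hab
  simp only [smul_eq_mul] at this ⊢
  nlinarith

theorem StrictConvexOn.sum_comp_apply {ι : Type*} [Fintype ι] {φ : ℝ → ℝ}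
    (hφ : StrictConvexOn ℝ univ φ) : StrictConvexOn ℝ univ fun x : ι → ℝ => ∑ i, φ (x i) := by
  refine ⟨convex_univ, fun x _ y _ hxy a b ha hb hab => ?_⟩
  obtain ⟨k, hk⟩ := Function.ne_iff.1 hxy
  simp only [Pi.add_apply, Pi.smul_apply, smul_eq_mul, Finset.mul_sum, ← Finset.sum_add_distrib]
  refine Finset.sum_lt_sum (fun i _ => ?_) ⟨k, Finset.mem_univ k, hφ.2 trivial trivial hk ha hb hab⟩
  rcases eq_or_ne (x i) (y i) with hi | hi
  · rw [hi, ← add_mul, ← add_mul, hab, one_mul, one_mul]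
  · exact (hφ.2 trivial trivial hi ha hb hab).le

theorem convex_setOf_strictMono {ι : Type*} [Preorder ι] :
    Convex ℝ {x : ι → ℝ | StrictMono x} := by
  intro x hx y hy a b ha hb hab i j hij
  have hxij := hx hij
  have hyij := hy hij
  simp only [Pi.add_apply, Pi.smul_apply, smul_eq_mul]
  rcases ha.eq_or_lt with rfl | ha
  · simp only [zero_add] at hab
    simp [hab, hyij]
  · nlinarith [mul_lt_mul_of_pos_left hxij ha]

theorem concaveOn_log_sub_apply {ι : Type*} (i j : ι) :
    ConcaveOn ℝ {x : ι → ℝ | x i < x j} fun x => Real.log (x j - x i) := by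
  have hlin := strictConcaveOn_log_Ioi.concaveOn.comp_affineMap
    (((LinearMap.proj j : (ι → ℝ) →ₗ[ℝ] ℝ) - LinearMap.proj i).toAffineMap)
  have hs : {x : ι → ℝ | x i < x j} =
      ((LinearMap.proj j : (ι → ℝ) →ₗ[ℝ] ℝ) - LinearMap.proj i).toAffineMap ⁻¹' Ioi 0 := by
    ext x
    simp
  exact hs ▸ hlin

theorem ConcaveOn.isMaxOn_of_hasFDerivAt_eq_zero {E : Type*} [NormedAddCommGroup E]
    [NormedSpace ℝ E] {s : Set E} {f : E → ℝ} {x : E} (hf : ConcaveOn ℝ s f) (hx : x ∈ s)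
    (hf' : HasFDerivAt f (0 : E →L[ℝ] ℝ) x) : IsMaxOn f s x := by
  intro y hy
  set g : ℝ → ℝ := f ∘ AffineMap.lineMap x y
  have hg : ConcaveOn ℝ (Icc 0 1) g :=
    (hf.comp_affineMap (AffineMap.lineMap x y)).subset
      (fun t ht => hf.1.lineMap_mem hx hy ht) (convex_Icc 0 1)
  have hg' : HasDerivAt g 0 0 := by
    have hx0 : AffineMap.lineMap x y (0 : ℝ) = x := AffineMap.lineMap_apply_zero x y
    simpa using (hx0 ▸ hf').comp_hasDerivAt (0 : ℝ) AffineMap.hasDerivAt_lineMap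
  have := hg.slope_le_of_hasDerivAt (by simp) (by simp) zero_lt_one hg'
  simpa [g, slope_def_field] using this

theorem StrictConcaveOn.eq_of_hasFDerivAt_eq_zero {E : Type*} [NormedAddCommGroup E]
    [NormedSpace ℝ E] {s : Set E} {f : E → ℝ} {x y : E} (hf : StrictConcaveOn ℝ s f)
    (hx : x ∈ s) (hy : y ∈ s) (hfx : HasFDerivAt f (0 : E →L[ℝ] ℝ) x)
    (hfy : HasFDerivAt f (0 : E →L[ℝ] ℝ) y) : x = y :=
  hf.eq_of_isMaxOn (hf.concaveOn.isMaxOn_of_hasFDerivAt_eq_zero hx hfx)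
    (hf.concaveOn.isMaxOn_of_hasFDerivAt_eq_zero hy hfy) hx hy

theorem stmt_12_general (n : ℕ)
    (F : (Fin n → ℝ) → ℝ)
    (hF : F = fun x => (∑ i, ∑ j ∈ Finset.univ.filter (fun j => i < j),
        Real.log (x j - x i)) - (1 / 2) * ∑ k, (x k) ^ 2)
    (D : Set (Fin n → ℝ)) (hD : D = {x | StrictMono x}) :
    StrictConcaveOn ℝ D F ∧
      ∀ x ∈ D, ∀ y ∈ D, fderiv ℝ F x = 0 → fderiv ℝ F y = 0 → x = y := by
  subst hD
  have hconv := convex_setOf_strictMono (ι := Fin n)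
  have hconc : StrictConcaveOn ℝ {x | StrictMono x} F := by
    have hlog : ConcaveOn ℝ {x : Fin n → ℝ | StrictMono x} fun x =>
        ∑ i, ∑ j ∈ Finset.univ.filter (fun j => i < j), Real.log (x j - x i) :=
      .fun_sum _ hconv fun i _ => .fun_sum _ hconv fun j hj =>
        (concaveOn_log_sub_apply i j).subset (fun x hx => hx (Finset.mem_filter.1 hj).2) hconv
    have hsq : StrictConvexOn ℝ univ fun x : Fin n → ℝ => (1 / 2) * ∑ k, x k ^ 2 :=
      (Even.strictConvexOn_pow even_two two_ne_zero).sum_comp_apply.const_mul (by norm_num)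
    exact hF ▸ hlog.sub_strictConvexOn (hsq.subset (subset_univ _) hconv)
  -- `fderiv` is `0` at non-differentiable points, so differentiability on `D` is what makes
  -- `fderiv F x = 0` a genuine critical point.
  have hcrit (x : Fin n → ℝ) (hx : StrictMono x) (hx' : fderiv ℝ F x = 0) :
      HasFDerivAt F (0 : (Fin n → ℝ) →L[ℝ] ℝ) x := by
    refine hx' ▸ DifferentiableAt.hasFDerivAt ?_
    subst hF
    fun_prop (disch := exact sub_ne_zero.2 (hx (Finset.mem_filter.1 ‹_›).2).ne')
  exact ⟨hconc, fun x hx y hy hfx hfy =>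
    hconc.eq_of_hasFDerivAt_eq_zero hx hy (hcrit x hx hfx) (hcrit y hy hfy)⟩

theorem stmt_12 (n : ℕ) (hn : 1 ≤ n)
    (F : (Fin n → ℝ) → ℝ)
    (hF : F = fun x => (∑ i, ∑ j ∈ Finset.univ.filter (fun j => i < j),
        Real.log (x j - x i)) - (1 / 2) * ∑ k, (x k) ^ 2)
    (D : Set (Fin n → ℝ)) (hD : D = {x | StrictMono x}) :
    StrictConcaveOn ℝ D F ∧
      ∀ x ∈ D, ∀ y ∈ D, fderiv ℝ F x = 0 → fderiv ℝ F y = 0 → x = y :=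
  stmt_12_general n F hF D hD
end
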